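/- arXiv:1802.02988 — 5 statements merged into one kernel-verified Lean document; each statement's English description precedes it below -/
import Mathlib

section
/- If h : ℝ^d → ℝ is convex and L-Lipschitz, and c : ℝ^d → ℝ^m is C¹ with β-Lipschitz Jacobian, then the composition g = h ∘ c is Lβ-weakly convex. -/
/-! Comparing `t ↦ c (x + t • v) - c x - t • Dc(x) v` with `t ↦ β/2 ‖v‖² t²` gives the descent
bound `‖c y - c x - Dc(x) (y - x)‖ ≤ β/2 ‖y - x‖²`. Applied at `z = a • x + b • y` towards `x` and
towards `y`, it puts `c z` within `β/2 · a b ‖x - y‖²` of `a • c x + b • c y`, the first-order terms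
cancelling. As `h` is convex and `L`-Lipschitz, `h ∘ c` is then `(-Lβ)`-strongly convex, which in a
Hilbert space means that `h ∘ c + Lβ/2 ‖·‖²` is convex. -/

open Set

section

variable {E F : Type*} [NormedAddCommGroup E] [NormedSpace ℝ E]
  [NormedAddCommGroup F] [NormedSpace ℝ F]

theorem norm_image_sub_sub_fderiv_le_of_lipschitz_fderiv {f : E → F} {f' : E → E →L[ℝ] F} {β : ℝ}
    (hf : ∀ x, HasFDerivAt f (f' x) x) (hf' : ∀ x y, ‖f' x - f' y‖ ≤ β * ‖x - y‖) (x y : E) :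
    ‖f y - f x - f' x (y - x)‖ ≤ β / 2 * ‖y - x‖ ^ 2 := by
  set v := y - x
  let g : ℝ → F := fun t => f (x + t • v) - f x - t • f' x v
  have hg : ∀ t : ℝ, HasDerivAt g (f' (x + t • v) v - f' x v) t := fun t => by
    have hpath : HasDerivAt (fun t : ℝ => x + t • v) v t := by
      simpa using ((hasDerivAt_id t).smul_const v).const_add x
    exact (((hf _).comp_hasDerivAt t hpath).sub_const _).sub
      ((hasDerivAt_id t).smul_const (f' x v) |>.congr_deriv (one_smul ℝ _))
  have hB : ∀ t : ℝ, HasDerivAt (fun t => β / 2 * ‖v‖ ^ 2 * t ^ 2) (β * ‖v‖ ^ 2 * t) t :=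
    fun t => ((hasDerivAt_pow 2 t).const_mul (β / 2 * ‖v‖ ^ 2)).congr_deriv (by push_cast; ring)
  have hbound : ∀ t ∈ Ico (0 : ℝ) 1, ‖f' (x + t • v) v - f' x v‖ ≤ β * ‖v‖ ^ 2 * t := by
    rintro t ⟨ht, -⟩
    calc ‖f' (x + t • v) v - f' x v‖ = ‖(f' (x + t • v) - f' x) v‖ := rfl
      _ ≤ ‖f' (x + t • v) - f' x‖ * ‖v‖ := ContinuousLinearMap.le_opNorm _ _
      _ ≤ β * ‖x + t • v - x‖ * ‖v‖ := by gcongr; exact hf' _ _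
      _ = β * ‖v‖ ^ 2 * t := by
        rw [add_sub_cancel_left, norm_smul, Real.norm_of_nonneg ht]; ring
  have := image_norm_le_of_norm_deriv_right_le_deriv_boundary
    (fun t _ => (hg t).continuousAt.continuousWithinAt) (fun t _ => (hg t).hasDerivWithinAt)
    (by simp [g]) hB hbound (right_mem_Icc.2 zero_le_one)
  simpa [g, v] using this

theorem norm_smul_add_smul_sub_image_le_of_lipschitz_fderiv
    {f : E → F} {f' : E → E →L[ℝ] F} {β : ℝ}
    (hf : ∀ x, HasFDerivAt f (f' x) x) (hf' : ∀ x y, ‖f' x - f' y‖ ≤ β * ‖x - y‖)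
    {a b : ℝ} (ha : 0 ≤ a) (hb : 0 ≤ b) (hab : a + b = 1) (x y : E) :
    ‖a • f x + b • f y - f (a • x + b • y)‖ ≤ β / 2 * a * b * ‖x - y‖ ^ 2 := by
  set z := a • x + b • y with hz
  have hxz : x - z = b • (x - y) := by linear_combination (norm := module) -hz - hab • x
  have hyz : y - z = a • (y - x) := by linear_combination (norm := module) -hz - hab • y
  have hsum : a • (x - z) + b • (y - z) = 0 := by
    linear_combination (norm := module) -hz - hab • z
  have hdecomp : a • f x + b • f y - f z = a • (f x - f z - f' z (x - z)) +
      b • (f y - f z - f' z (y - z)) + f' z (a • (x - z) + b • (y - z)) := by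
    rw [map_add, map_smul, map_smul]
    linear_combination (norm := module) hab • f z
  rw [hdecomp, hsum, map_zero, add_zero]
  calc ‖a • (f x - f z - f' z (x - z)) + b • (f y - f z - f' z (y - z))‖
      ≤ a * ‖f x - f z - f' z (x - z)‖ + b * ‖f y - f z - f' z (y - z)‖ := by
        refine (norm_add_le _ _).trans_eq ?_
        rw [norm_smul, norm_smul, Real.norm_of_nonneg ha, Real.norm_of_nonneg hb]
    _ ≤ a * (β / 2 * ‖x - z‖ ^ 2) + b * (β / 2 * ‖y - z‖ ^ 2) := by
        gcongr <;> exact norm_image_sub_sub_fderiv_le_of_lipschitz_fderiv hf hf' _ _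
    _ = β / 2 * a * b * ‖x - y‖ ^ 2 := by
        rw [hxz, hyz, norm_smul, norm_smul, Real.norm_of_nonneg ha, Real.norm_of_nonneg hb,
          norm_sub_rev y x]
        linear_combination (β / 2 * a * b * ‖x - y‖ ^ 2) * hab

theorem ConvexOn.strongConvexOn_neg_comp_of_lipschitz {h : F → ℝ} {L : ℝ}
    (hconv : ConvexOn ℝ univ h) (hL : 0 ≤ L) (hlip : ∀ u v, |h u - h v| ≤ L * ‖u - v‖)
    {f : E → F} {f' : E → E →L[ℝ] F} {β : ℝ}
    (hf : ∀ x, HasFDerivAt f (f' x) x) (hf' : ∀ x y, ‖f' x - f' y‖ ≤ β * ‖x - y‖) :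
    StrongConvexOn univ (-(L * β)) (h ∘ f) := by
  refine ⟨convex_univ, fun x _ y _ a b ha hb hab => ?_⟩
  have hlip_combo : h (f (a • x + b • y)) ≤ h (a • f x + b • f y) +
      L * ‖a • f x + b • f y - f (a • x + b • y)‖ := by
    have := (le_abs_self _).trans (hlip (f (a • x + b • y)) (a • f x + b • f y))
    rw [norm_sub_rev] at this
    linarith
  have hconv_combo : h (a • f x + b • f y) ≤ a * h (f x) + b * h (f y) :=
    hconv.2 (mem_univ _) (mem_univ _) ha hb hab
  have hchord := mul_le_mul_of_nonneg_left
    (norm_smul_add_smul_sub_image_le_of_lipschitz_fderiv hf hf' ha hb hab x y) hL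
  simp only [Function.comp_apply, smul_eq_mul]
  linarith

end

theorem composite_weakly_convex_general {d m : ℕ}
    (h : EuclideanSpace ℝ (Fin m) → ℝ) (L : ℝ) (hL : 0 ≤ L)
    (hconv : ConvexOn ℝ Set.univ h)
    (hlip : ∀ u v, |h u - h v| ≤ L * ‖u - v‖)
    (c : EuclideanSpace ℝ (Fin d) → EuclideanSpace ℝ (Fin m))
    (c' : EuclideanSpace ℝ (Fin d) → (EuclideanSpace ℝ (Fin d) →L[ℝ] EuclideanSpace ℝ (Fin m)))
    (β : ℝ)
    (hc : ∀ x, HasFDerivAt c (c' x) x)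
    (hclip : ∀ x y, ‖c' x - c' y‖ ≤ β * ‖x - y‖) :
    ConvexOn ℝ Set.univ (fun x => h (c x) + (L * β) / 2 * ‖x‖ ^ 2) := by
  simpa [neg_div] using
    strongConvexOn_iff_convex.1 (hconv.strongConvexOn_neg_comp_of_lipschitz hL hlip hc hclip)

/-- A composition `g = h ∘ c` of a convex `L`-Lipschitz function `h` with a `C¹` map `c`
having `β`-Lipschitz Jacobian is `Lβ`-weakly convex. -/
theorem composite_weakly_convex {d m : ℕ}
    (h : EuclideanSpace ℝ (Fin m) → ℝ) (L : ℝ) (hL : 0 ≤ L)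
    (hconv : ConvexOn ℝ Set.univ h)
    (hlip : ∀ u v, |h u - h v| ≤ L * ‖u - v‖)
    (c : EuclideanSpace ℝ (Fin d) → EuclideanSpace ℝ (Fin m))
    (c' : EuclideanSpace ℝ (Fin d) → (EuclideanSpace ℝ (Fin d) →L[ℝ] EuclideanSpace ℝ (Fin m)))
    (β : ℝ) (hβ : 0 ≤ β)
    (hc : ∀ x, HasFDerivAt c (c' x) x)
    (hclip : ∀ x y, ‖c' x - c' y‖ ≤ β * ‖x - y‖) :
    ConvexOn ℝ Set.univ (fun x => h (c x) + (L * β) / 2 * ‖x‖ ^ 2) :=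
  composite_weakly_convex_general h L hL hconv hlip c c' β hc hclip
end

section
/- Let g be ρ-weakly convex, C the indicator of a closed convex set X ⊆ ℝ^d, φ = g + indicator of X, ρ̂ > ρ, α > 0, and x ∈ X. Let x̂ = prox_{φ/ρ̂}(x), and ζ ∈ ∂g(x) with ‖ζ‖ ≤ L. Then for x⁺ = proj_X(x - αζ): φ_{1/ρ̂}(x⁺) ≤ φ_{1/ρ̂}(x) + ρ̂α(g(x̂) - g(x) + (ρ/2)‖x - x̂‖²) + (α²ρ̂/2)L². -/
/-!
Evaluate the envelope at `x⁺` on the old proximal point `x̂` instead of its minimizer. Since the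
projection onto the convex set `X` is nonexpansive, `x⁺` is no farther from `x̂ ∈ X` than
`x - αζ` is. Expanding `‖x̂ - (x - αζ)‖²` leaves the cross term `2α⟪ζ, x̂ - x⟫`, which the
weak-convexity subgradient inequality bounds by `2α (g x̂ - g x + ρ/2 ‖x - x̂‖²)`, and the term
`α²‖ζ‖² ≤ α²L²`.
-/

open RealInnerProductSpace

variable {E : Type*} [NormedAddCommGroup E] [InnerProductSpace ℝ E]

theorem Convex.inner_sub_nonpos_of_forall_norm_sub_le {X : Set E} (hX : Convex ℝ X)
    {p q : E} (hqX : q ∈ X) (hq : ∀ y ∈ X, ‖q - p‖ ≤ ‖y - p‖) :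
    ∀ w ∈ X, ⟪p - q, w - q⟫ ≤ 0 := by
  have : Nonempty X := ⟨⟨q, hqX⟩⟩
  refine (norm_eq_iInf_iff_real_inner_le_zero hX hqX).mp (le_antisymm ?_ ?_)
  · exact le_ciInf fun w => by simpa only [norm_sub_rev] using hq w w.2
  · exact ciInf_le ⟨0, fun _ ⟨_, h⟩ => h ▸ norm_nonneg _⟩ (⟨q, hqX⟩ : X)

theorem Convex.norm_sub_le_of_forall_norm_sub_le {X : Set E} (hX : Convex ℝ X)
    {p q w : E} (hqX : q ∈ X) (hq : ∀ y ∈ X, ‖q - p‖ ≤ ‖y - p‖) (hw : w ∈ X) :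
    ‖w - q‖ ≤ ‖w - p‖ := by
  have hvar := hX.inner_sub_nonpos_of_forall_norm_sub_le hqX hq w hw
  have hexpand : ‖w - p‖ ^ 2 = ‖w - q‖ ^ 2 - 2 * ⟪w - q, p - q⟫ + ‖p - q‖ ^ 2 := by
    rw [← norm_sub_sq_real, sub_sub_sub_cancel_right]
  rw [real_inner_comm] at hvar
  refine le_of_sq_le_sq ?_ (norm_nonneg _)
  nlinarith [sq_nonneg ‖p - q‖]

theorem inner_sub_le_of_weak_subgradient {g : E → ℝ} {ρ : ℝ} {x ζ : E}
    (hζ : ∀ y, g y + ρ / 2 * ‖y‖ ^ 2 ≥ g x + ρ / 2 * ‖x‖ ^ 2 + ⟪ζ + ρ • x, y - x⟫) (y : E) :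
    ⟪y - x, ζ⟫ ≤ g y - g x + ρ / 2 * ‖x - y‖ ^ 2 := by
  have hsub := hζ y
  have hx : ⟪x, y - x⟫ = ⟪x, y⟫ - ‖x‖ ^ 2 := by
    rw [inner_sub_right, real_inner_self_eq_norm_sq]
  rw [inner_add_left, real_inner_smul_left, hx] at hsub
  rw [real_inner_comm, norm_sub_sq_real]
  linarith

theorem norm_sub_sub_smul_sq (w x ζ : E) (α : ℝ) :
    ‖w - (x - α • ζ)‖ ^ 2 = ‖w - x‖ ^ 2 + 2 * α * ⟪w - x, ζ⟫ + α ^ 2 * ‖ζ‖ ^ 2 := by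
  rw [show w - (x - α • ζ) = (w - x) + α • ζ by abel, norm_add_sq_real, real_inner_smul_right,
    norm_smul, Real.norm_eq_abs, mul_pow, sq_abs]
  ring

theorem projected_step_envelope_decrease_general {d : ℕ}
    (g : EuclideanSpace ℝ (Fin d) → ℝ) (ρ ρhat α L : ℝ)
    (hρ : 0 ≤ ρ) (hρhat : ρ < ρhat) (hα : 0 < α)
    (X : Set (EuclideanSpace ℝ (Fin d)))
    (hXconv : Convex ℝ X)
    (x xhat ζ xplus xhatplus : EuclideanSpace ℝ (Fin d))
    -- x̂ = prox_{φ/ρ̂}(x), a minimizer of g(y) + (ρ̂/2)‖y - x‖² over X: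
    (hxhatX : xhat ∈ X)
    -- ζ ∈ ∂g(x) with ‖ζ‖ ≤ L:
    (hζ : ∀ y, g y + ρ / 2 * ‖y‖ ^ 2 ≥
      g x + ρ / 2 * ‖x‖ ^ 2 + (inner ℝ (ζ + ρ • x) (y - x) : ℝ))
    (hζL : ‖ζ‖ ≤ L)
    -- x⁺ = proj_X(x - αζ), the nearest point of X to x - αζ:
    (hxplusX : xplus ∈ X)
    (hxplus : ∀ y ∈ X, ‖xplus - (x - α • ζ)‖ ≤ ‖y - (x - α • ζ)‖)
    -- x̂⁺ is the minimizer defining the envelope value φ_{1/ρ̂}(x⁺):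
    (hxhatplus : ∀ y ∈ X, g xhatplus + ρhat / 2 * ‖xhatplus - xplus‖ ^ 2 ≤
      g y + ρhat / 2 * ‖y - xplus‖ ^ 2) :
    g xhatplus + ρhat / 2 * ‖xhatplus - xplus‖ ^ 2 ≤
      (g xhat + ρhat / 2 * ‖xhat - x‖ ^ 2)
        + ρhat * α * (g xhat - g x + ρ / 2 * ‖x - xhat‖ ^ 2)
        + α ^ 2 * ρhat / 2 * L ^ 2 := by
  have hρhat_nonneg : 0 ≤ ρhat := by linarith
  have hζsq : ‖ζ‖ ^ 2 ≤ L ^ 2 := pow_le_pow_left₀ (norm_nonneg ζ) hζL 2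
  calc g xhatplus + ρhat / 2 * ‖xhatplus - xplus‖ ^ 2
      ≤ g xhat + ρhat / 2 * ‖xhat - xplus‖ ^ 2 := hxhatplus xhat hxhatX
    _ ≤ g xhat + ρhat / 2 * ‖xhat - (x - α • ζ)‖ ^ 2 := by
        gcongr
        exact hXconv.norm_sub_le_of_forall_norm_sub_le hxplusX hxplus hxhatX
    _ = (g xhat + ρhat / 2 * ‖xhat - x‖ ^ 2) + ρhat * α * ⟪xhat - x, ζ⟫
          + α ^ 2 * ρhat / 2 * ‖ζ‖ ^ 2 := by
        rw [norm_sub_sub_smul_sq]; ring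
    _ ≤ _ := by
        gcongr
        exact inner_sub_le_of_weak_subgradient hζ xhat

/-- One-step envelope decrease for the projected subgradient step (inequality (2.2)–(2.5)):
with `φ = g + δ_X`, `x̂ = prox_{φ/ρ̂}(x)`, `ζ ∈ ∂g(x)`, `‖ζ‖ ≤ L`, and
`x⁺ = proj_X(x - αζ)`, one has
`φ_{1/ρ̂}(x⁺) ≤ φ_{1/ρ̂}(x) + ρ̂α(g(x̂) - g(x) + (ρ/2)‖x - x̂‖²) + (α²ρ̂/2)L²`,
where the envelope values are witnessed by their (attained) minimizers over `X`. -/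
theorem projected_step_envelope_decrease {d : ℕ}
    (g : EuclideanSpace ℝ (Fin d) → ℝ) (ρ ρhat α L : ℝ)
    (hρ : 0 ≤ ρ) (hρhat : ρ < ρhat) (hα : 0 < α) (hL : 0 ≤ L)
    (hwc : ConvexOn ℝ Set.univ (fun x => g x + ρ / 2 * ‖x‖ ^ 2))
    (X : Set (EuclideanSpace ℝ (Fin d)))
    (hXclosed : IsClosed X) (hXconv : Convex ℝ X)
    (x xhat ζ xplus xhatplus : EuclideanSpace ℝ (Fin d))
    (hx : x ∈ X)
    -- x̂ = prox_{φ/ρ̂}(x), a minimizer of g(y) + (ρ̂/2)‖y - x‖² over X: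
    (hxhatX : xhat ∈ X)
    (hxhat : ∀ y ∈ X, g xhat + ρhat / 2 * ‖xhat - x‖ ^ 2 ≤ g y + ρhat / 2 * ‖y - x‖ ^ 2)
    -- ζ ∈ ∂g(x) with ‖ζ‖ ≤ L:
    (hζ : ∀ y, g y + ρ / 2 * ‖y‖ ^ 2 ≥
      g x + ρ / 2 * ‖x‖ ^ 2 + (inner ℝ (ζ + ρ • x) (y - x) : ℝ))
    (hζL : ‖ζ‖ ≤ L)
    -- x⁺ = proj_X(x - αζ), the nearest point of X to x - αζ:
    (hxplusX : xplus ∈ X)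
    (hxplus : ∀ y ∈ X, ‖xplus - (x - α • ζ)‖ ≤ ‖y - (x - α • ζ)‖)
    -- x̂⁺ is the minimizer defining the envelope value φ_{1/ρ̂}(x⁺):
    (hxhatplusX : xhatplus ∈ X)
    (hxhatplus : ∀ y ∈ X, g xhatplus + ρhat / 2 * ‖xhatplus - xplus‖ ^ 2 ≤
      g y + ρhat / 2 * ‖y - xplus‖ ^ 2) :
    g xhatplus + ρhat / 2 * ‖xhatplus - xplus‖ ^ 2 ≤
      (g xhat + ρhat / 2 * ‖xhat - x‖ ^ 2)
        + ρhat * α * (g xhat - g x + ρ / 2 * ‖x - xhat‖ ^ 2)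
        + α ^ 2 * ρhat / 2 * L ^ 2 :=
  projected_step_envelope_decrease_general g ρ ρhat α L hρ hρhat hα X hXconv x xhat ζ xplus xhatplus
    hxhatX hζ hζL hxplusX hxplus hxhatplus
end

section
/- Let φ be proper closed convex with dom φ of diameter at most D, x_c ∈ dom φ, μ, λ > 0, and φ̂ = φ + (μ/2)‖· - x_c‖². Then for any x ∈ dom φ, ‖∇φ_{1/(λ+μ)}((μ/(μ+λ)) x_c + (λ/(μ+λ)) x)‖ ≤ ((λ+μ)/λ)‖∇φ̂_{1/λ}(x)‖ + μD. -/
/-!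
Completing the square, `μ/2‖y - x_c‖² + λ/2‖y - x‖² = (λ+μ)/2‖y - z‖² + λμ/(2(λ+μ))‖x - x_c‖²`
with `z = (μ/(μ+λ))x_c + (λ/(μ+λ))x`, turns `φ̂_{1/λ}` into `φ_{1/(λ+μ)}` composed with the affine
map `x ↦ z` plus a quadratic in `x`. Differentiating,
`∇φ̂_{1/λ}(x) = (λ/(μ+λ))∇φ_{1/(λ+μ)}(z) + (λμ/(λ+μ))(x - x_c)`; solving for `∇φ_{1/(λ+μ)}(z)` and
using `‖x - x_c‖ ≤ D` gives the bound.
-/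

open InnerProductSpace

namespace EReal

noncomputable def addCoeOrderIso (c : ℝ) : EReal ≃o EReal where
  toFun a := a + c
  invFun a := a - c
  left_inv _ := EReal.add_sub_cancel_right
  right_inv _ := EReal.sub_add_cancel
  map_rel_iff' := (EReal.addLECancellable_coe c).add_le_add_iff_right

theorem iInf_add_coe {ι : Sort*} (f : ι → EReal) (c : ℝ) :
    ⨅ i, f i + c = (⨅ i, f i) + c :=
  ((addCoeOrderIso c).map_iInf f).symm

end EReal

section Gradient

variable {F : Type*} [NormedAddCommGroup F] [InnerProductSpace ℝ F] [CompleteSpace F]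
  {f g : F → ℝ} {f' g' x : F}

theorem HasGradientAt.add (hf : HasGradientAt f f' x) (hg : HasGradientAt g g' x) :
    HasGradientAt (fun y => f y + g y) (f' + g') x := by
  rw [hasGradientAt_iff_hasFDerivAt] at *
  rw [map_add]
  exact hf.add hg

theorem HasGradientAt.const_mul (c : ℝ) (hf : HasGradientAt f f' x) :
    HasGradientAt (fun y => c * f y) (c • f') x := by
  rw [hasGradientAt_iff_hasFDerivAt] at *
  rw [map_smul]
  exact hf.const_mul c

theorem HasGradientAt.comp_const_add_smul (a : F) (s : ℝ) (hf : HasGradientAt f f' (a + s • x)) :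
    HasGradientAt (fun y => f (a + s • y)) (s • f') x := by
  rw [hasGradientAt_iff_hasFDerivAt] at *
  have hL : toDual ℝ F (s • f') = (toDual ℝ F f').comp (s • ContinuousLinearMap.id ℝ F) := by
    ext v
    simp
  rw [hL]
  exact hf.comp x (((hasFDerivAt_id x).const_smul s).const_add a)

theorem hasGradientAt_norm_sub_sq (a x : F) :
    HasGradientAt (fun y => ‖y - a‖ ^ 2) ((2 : ℝ) • (x - a)) x := by
  rw [hasGradientAt_iff_hasFDerivAt]
  have hL : toDual ℝ F ((2 : ℝ) • (x - a)) =
      (2 : ℕ) • (innerSL ℝ (x - a)).comp (ContinuousLinearMap.id ℝ F) := by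
    ext v
    simp
  rw [hL]
  exact ((hasFDerivAt_id x).sub_const a).norm_sq

end Gradient

theorem norm_sub_sq_add_norm_sub_sq_eq {E : Type*} [NormedAddCommGroup E] [InnerProductSpace ℝ E]
    {μ lam : ℝ} (h : μ + lam ≠ 0) (y a w : E) :
    μ / 2 * ‖y - a‖ ^ 2 + lam / 2 * ‖y - w‖ ^ 2 =
      (lam + μ) / 2 * ‖y - ((μ / (μ + lam)) • a + (lam / (μ + lam)) • w)‖ ^ 2 +
        lam * μ / (lam + μ) / 2 * ‖w - a‖ ^ 2 := by
  have hz : y - ((μ / (μ + lam)) • a + (lam / (μ + lam)) • w) =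
      (μ / (μ + lam)) • (y - a) + (lam / (μ + lam)) • (y - w) := by
    rw [smul_sub, smul_sub, sub_add_sub_comm, ← add_smul, ← add_div, div_self h, one_smul]
  have hw : w - a = (y - a) - (y - w) := (sub_sub_sub_cancel_left a w y).symm
  rw [hz, hw, norm_add_sq_real, norm_sub_sq_real (y - a), add_comm lam μ]
  simp only [norm_smul, Real.norm_eq_abs, mul_pow, sq_abs, real_inner_smul_left,
    real_inner_smul_right]
  field_simp
  ring

theorem iInf_add_norm_sub_sq_eq {E : Type*} [NormedAddCommGroup E] [InnerProductSpace ℝ E]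
    (φ : E → EReal) {μ lam : ℝ} (h : μ + lam ≠ 0) (a w : E) :
    ⨅ y, φ y + ((μ / 2 * ‖y - a‖ ^ 2 + lam / 2 * ‖y - w‖ ^ 2 : ℝ) : EReal) =
      (⨅ y, φ y + (((lam + μ) / 2 *
          ‖y - ((μ / (μ + lam)) • a + (lam / (μ + lam)) • w)‖ ^ 2 : ℝ) : EReal)) +
        ((lam * μ / (lam + μ) / 2 * ‖w - a‖ ^ 2 : ℝ) : EReal) := by
  simp_rw [← EReal.iInf_add_coe, add_assoc, ← EReal.coe_add, norm_sub_sq_add_norm_sub_sq_eq h]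

theorem regularized_envelope_gradient_bound_general {d : ℕ}
    (φ : EuclideanSpace ℝ (Fin d) → EReal) (μ lam D : ℝ)
    (hμ : 0 < μ) (hlam : 0 < lam)
    (hdiam : ∀ u v, φ u ≠ ⊤ → φ v ≠ ⊤ → ‖u - v‖ ≤ D)
    (xc : EuclideanSpace ℝ (Fin d)) (hxc : φ xc ≠ ⊤)
    -- env₁ = φ_{1/(λ+μ)} and env₂ = φ̂_{1/λ}, with gradient maps G₁, G₂:
    (env₁ env₂ : EuclideanSpace ℝ (Fin d) → ℝ)
    (henv₁ : ∀ w, (env₁ w : EReal) = ⨅ y, φ y + (((lam + μ) / 2 * ‖y - w‖ ^ 2 : ℝ) : EReal))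
    (henv₂ : ∀ w, (env₂ w : EReal) =
      ⨅ y, φ y + ((μ / 2 * ‖y - xc‖ ^ 2 + lam / 2 * ‖y - w‖ ^ 2 : ℝ) : EReal))
    (G₁ G₂ : EuclideanSpace ℝ (Fin d) → EuclideanSpace ℝ (Fin d))
    (hG₁ : ∀ w, HasGradientAt env₁ (G₁ w) w)
    (hG₂ : ∀ w, HasGradientAt env₂ (G₂ w) w)
    (x : EuclideanSpace ℝ (Fin d)) (hx : φ x ≠ ⊤) :
    ‖G₁ ((μ / (μ + lam)) • xc + (lam / (μ + lam)) • x)‖ ≤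
      (lam + μ) / lam * ‖G₂ x‖ + μ * D := by
  have hμlam : μ + lam ≠ 0 := by positivity
  set z := (μ / (μ + lam)) • xc + (lam / (μ + lam)) • x
  have henv : env₂ = fun w => env₁ ((μ / (μ + lam)) • xc + (lam / (μ + lam)) • w) +
      lam * μ / (lam + μ) / 2 * ‖w - xc‖ ^ 2 := by
    funext w
    apply EReal.coe_injective
    rw [henv₂, iInf_add_norm_sub_sq_eq φ hμlam, ← henv₁, EReal.coe_add]
  have hgrad : HasGradientAt env₂ ((lam / (μ + lam)) • G₁ z +
      (lam * μ / (lam + μ) / 2) • (2 : ℝ) • (x - xc)) x := by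
    rw [henv]
    exact ((hG₁ z).comp_const_add_smul _ _).add ((hasGradientAt_norm_sub_sq xc x).const_mul _)
  have hG₁z : G₁ z = ((lam + μ) / lam) • G₂ x - μ • (x - xc) := by
    rw [(hG₂ x).unique hgrad]
    match_scalars <;> field_simp <;> ring
  calc ‖G₁ z‖ ≤ ‖((lam + μ) / lam) • G₂ x‖ + ‖μ • (x - xc)‖ := by
        rw [hG₁z]; exact norm_sub_le _ _
    _ = (lam + μ) / lam * ‖G₂ x‖ + μ * ‖x - xc‖ := by
        rw [norm_smul, norm_smul, Real.norm_of_nonneg (by positivity), Real.norm_of_nonneg hμ.le]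
    _ ≤ (lam + μ) / lam * ‖G₂ x‖ + μ * D := by
        gcongr
        exact hdiam x xc hx hxc

/-- Gradient bound (2.6): for proper closed convex `φ` with `diam(dom φ) ≤ D`,
`φ̂ = φ + (μ/2)‖· - x_c‖²`, and `x ∈ dom φ`:
`‖∇φ_{1/(λ+μ)}((μ/(μ+λ))x_c + (λ/(μ+λ))x)‖ ≤ ((λ+μ)/λ)‖∇φ̂_{1/λ}(x)‖ + μD`. -/
theorem regularized_envelope_gradient_bound {d : ℕ}
    (φ : EuclideanSpace ℝ (Fin d) → EReal) (μ lam D : ℝ)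
    (hμ : 0 < μ) (hlam : 0 < lam) (hD : 0 ≤ D)
    (hproper : ∃ x, φ x ≠ ⊤) (hnbot : ∀ x, φ x ≠ ⊥)
    (hclosed : LowerSemicontinuous φ)
    (hconv : ∀ x y : EuclideanSpace ℝ (Fin d), ∀ a b : ℝ, 0 ≤ a → 0 ≤ b → a + b = 1 →
      φ (a • x + b • y) ≤ (a : EReal) * φ x + (b : EReal) * φ y)
    (hdiam : ∀ u v, φ u ≠ ⊤ → φ v ≠ ⊤ → ‖u - v‖ ≤ D)
    (xc : EuclideanSpace ℝ (Fin d)) (hxc : φ xc ≠ ⊤)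
    -- env₁ = φ_{1/(λ+μ)} and env₂ = φ̂_{1/λ}, with gradient maps G₁, G₂:
    (env₁ env₂ : EuclideanSpace ℝ (Fin d) → ℝ)
    (henv₁ : ∀ w, (env₁ w : EReal) = ⨅ y, φ y + (((lam + μ) / 2 * ‖y - w‖ ^ 2 : ℝ) : EReal))
    (henv₂ : ∀ w, (env₂ w : EReal) =
      ⨅ y, φ y + ((μ / 2 * ‖y - xc‖ ^ 2 + lam / 2 * ‖y - w‖ ^ 2 : ℝ) : EReal))
    (G₁ G₂ : EuclideanSpace ℝ (Fin d) → EuclideanSpace ℝ (Fin d))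
    (hG₁ : ∀ w, HasGradientAt env₁ (G₁ w) w)
    (hG₂ : ∀ w, HasGradientAt env₂ (G₂ w) w)
    (x : EuclideanSpace ℝ (Fin d)) (hx : φ x ≠ ⊤) :
    ‖G₁ ((μ / (μ + lam)) • xc + (lam / (μ + lam)) • x)‖ ≤
      (lam + μ) / lam * ‖G₂ x‖ + μ * D :=
  regularized_envelope_gradient_bound_general φ μ lam D hμ hlam hdiam xc hxc env₁ env₂ henv₁ henv₂
    G₁ G₂ hG₁ hG₂ x hx
end

section
/- Let g be C¹ with ρ-Lipschitz gradient, r proper closed convex, φ = g + r, ρ̂ > ρ, α ∈ (0, 1/ρ̂], x ∈ dom r, x̂ = prox_{φ/ρ̂}(x) with ρ̂(x - x̂) ∈ ∂r(x̂) + ∇g(x̂). Then for x⁺ = prox_{αr}(x - α∇g(x)): ‖x⁺ - x̂‖² ≤ ‖x - x̂‖² - α(ρ̂ - ρ)‖x - x̂‖². -/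
/-!
The optimality condition for `x̂` says that `x̂ = prox_{αr}(x̂ + α(ρ̂(x - x̂) - ∇g(x̂)))`, while
`x⁺ = prox_{αr}(x - α∇g(x))`. Since `prox_{αr}` is nonexpansive (subgradients are monotone),
`‖x⁺ - x̂‖ ≤ ‖(1 - αρ̂)(x - x̂) - α(∇g(x) - ∇g(x̂))‖ ≤ (1 - α(ρ̂ - ρ))‖x - x̂‖`,
and squaring the factor `1 - α(ρ̂ - ρ) ∈ [0, 1]` can only make it smaller.
-/

open Filter Topology Set

theorem nonpos_of_forall_le_mul {A C : ℝ} (h : ∀ t, 0 < t → t ≤ 1 → A ≤ t * C) : A ≤ 0 := by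
  have hlim : Tendsto (fun t ↦ t * C) (𝓝[>] 0) (𝓝 0) := by
    simpa using (tendsto_id.mul_const C).mono_left (nhdsWithin_le_nhds (a := (0 : ℝ)))
  refine ge_of_tendsto hlim ?_
  filter_upwards [Ioc_mem_nhdsGT zero_lt_one] with t ht using h t ht.1 ht.2

theorem sq_le_sub_mul_sq_of_le_one_sub_mul {N M c : ℝ} (hN : 0 ≤ N) (h : N ≤ (1 - c) * M)
    (hc₀ : 0 ≤ c) (hc₁ : c ≤ 1) : N ^ 2 ≤ M ^ 2 - c * M ^ 2 :=
  calc N ^ 2 ≤ ((1 - c) * M) ^ 2 := pow_le_pow_left₀ hN h 2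
    _ ≤ M ^ 2 - c * M ^ 2 := by
      linear_combination mul_nonneg (mul_nonneg hc₀ (sub_nonneg.2 hc₁)) (sq_nonneg M)

section

variable {E : Type*} [NormedAddCommGroup E] [InnerProductSpace ℝ E] {r : E → EReal}

def IsSubgradient (r : E → EReal) (p v : E) : Prop :=
  ∀ y, r p + ((inner ℝ v (y - p) : ℝ) : EReal) ≤ r y

/-- `p = prox_{αr}(z)`. -/
def IsProxPoint (r : E → EReal) (α : ℝ) (z p : E) : Prop :=
  ∀ y, r p + ((1 / (2 * α) * ‖p - z‖ ^ 2 : ℝ) : EReal) ≤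
    r y + ((1 / (2 * α) * ‖y - z‖ ^ 2 : ℝ) : EReal)

theorem IsSubgradient.ne_top {p v y : E} (h : IsSubgradient r p v) (hy : r y ≠ ⊤) :
    r p ≠ ⊤ := by
  intro hp
  have := h y
  rw [hp, EReal.top_add_coe, top_le_iff] at this
  exact hy this

theorem IsSubgradient.inner_sub_nonneg {p q v w : E} (hp : IsSubgradient r p v)
    (hq : IsSubgradient r q w) (hp_top : r p ≠ ⊤) (hp_bot : r p ≠ ⊥) :
    0 ≤ inner ℝ (v - w) (p - q) := by
  obtain ⟨a, ha⟩ : ∃ a : ℝ, r p = a := ⟨_, (EReal.coe_toReal hp_top hp_bot).symm⟩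
  have hq_bot : r q ≠ ⊥ := fun h ↦ by
    have := hp q
    rw [ha, h, ← EReal.coe_add, le_bot_iff] at this
    exact EReal.coe_ne_bot _ this
  obtain ⟨b, hb⟩ : ∃ b : ℝ, r q = b := ⟨_, (EReal.coe_toReal (hq.ne_top hp_top) hq_bot).symm⟩
  have hpq := hp q
  have hqp := hq p
  rw [ha, hb, ← EReal.coe_add, EReal.coe_le_coe_iff] at hpq hqp
  have : inner ℝ (v - w) (p - q) = -inner ℝ v (q - p) - inner ℝ w (p - q) := by
    rw [inner_sub_left, ← neg_sub q p, inner_neg_right]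
  linarith

theorem IsProxPoint.isSubgradient {α : ℝ} {z p : E} (hr_bot : ∀ x, r x ≠ ⊥)
    (hr_conv : ∀ x y : E, ∀ a b : ℝ, 0 ≤ a → 0 ≤ b → a + b = 1 →
      r (a • x + b • y) ≤ (a : EReal) * r x + (b : EReal) * r y)
    (hp : IsProxPoint r α z p) : IsSubgradient r p (α⁻¹ • (z - p)) := by
  intro y
  rcases eq_or_ne (r y) ⊤ with hy | hy
  · simp [hy]
  obtain ⟨b, hb⟩ : ∃ b : ℝ, r y = b := ⟨_, (EReal.coe_toReal hy (hr_bot y)).symm⟩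
  have hp_top : r p ≠ ⊤ := fun h ↦ by
    have := hp y
    rw [h, hb, EReal.top_add_coe, ← EReal.coe_add, top_le_iff] at this
    exact EReal.coe_ne_top _ this
  obtain ⟨a, ha⟩ : ∃ a : ℝ, r p = a := ⟨_, (EReal.coe_toReal hp_top (hr_bot p)).symm⟩
  rw [ha, hb, ← EReal.coe_add, EReal.coe_le_coe_iff, real_inner_smul_left]
  suffices a - b + α⁻¹ * inner ℝ (z - p) (y - p) ≤ 0 by linarith
  -- compare `p` with `(1 - t) • p + t • y` and let `t → 0⁺`
  refine nonpos_of_forall_le_mul (C := 1 / (2 * α) * ‖y - p‖ ^ 2) fun t ht0 ht1 ↦ ?_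
  have hconv := hr_conv p y (1 - t) t (by linarith) ht0.le (by ring)
  rw [ha, hb, ← EReal.coe_mul, ← EReal.coe_mul, ← EReal.coe_add] at hconv
  have hmin := (hp _).trans (add_le_add hconv le_rfl)
  rw [ha, ← EReal.coe_add, ← EReal.coe_add, EReal.coe_le_coe_iff] at hmin
  have hexpand : ‖((1 - t) • p + t • y) - z‖ ^ 2
      = ‖p - z‖ ^ 2 - 2 * t * inner ℝ (z - p) (y - p) + t ^ 2 * ‖y - p‖ ^ 2 := by
    rw [show (1 - t) • p + t • y - z = (p - z) + t • (y - p) by module, norm_add_sq_real,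
      inner_smul_right, norm_smul, mul_pow, Real.norm_eq_abs, sq_abs, ← neg_sub z p,
      inner_neg_left]
    ring
  rw [hexpand] at hmin
  have key : t * (a - b + α⁻¹ * inner ℝ (z - p) (y - p))
      ≤ t * (t * (1 / (2 * α) * ‖y - p‖ ^ 2)) := by
    linear_combination hmin
  exact le_of_mul_le_mul_left key ht0

theorem norm_le_of_inner_sub_nonneg {u w : E} (h : 0 ≤ inner ℝ (w - u) u) : ‖u‖ ≤ ‖w‖ := by
  have hsq : ‖u‖ * ‖u‖ ≤ ‖w‖ * ‖u‖ := by
    rw [inner_sub_left, real_inner_self_eq_norm_mul_norm] at h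
    linarith [real_inner_le_norm w u]
  rcases (norm_nonneg u).eq_or_lt with hu | hu
  · rw [← hu]
    exact norm_nonneg w
  · exact le_of_mul_le_mul_right hsq hu

theorem norm_sub_le_of_isSubgradient {α : ℝ} {z₁ z₂ p₁ p₂ : E} (hα : 0 < α)
    (h₁ : IsSubgradient r p₁ (α⁻¹ • (z₁ - p₁))) (h₂ : IsSubgradient r p₂ (α⁻¹ • (z₂ - p₂)))
    (h_top : r p₁ ≠ ⊤) (h_bot : r p₁ ≠ ⊥) : ‖p₁ - p₂‖ ≤ ‖z₁ - z₂‖ := by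
  have hmono := h₁.inner_sub_nonneg h₂ h_top h_bot
  rw [show α⁻¹ • (z₁ - p₁) - α⁻¹ • (z₂ - p₂) = α⁻¹ • ((z₁ - z₂) - (p₁ - p₂)) by module,
    real_inner_smul_left] at hmono
  exact norm_le_of_inner_sub_nonneg (nonneg_of_mul_nonneg_right hmono (inv_pos.2 hα))

theorem norm_smul_sub_smul_le {u v : E} {a b ρ : ℝ} (ha : 0 ≤ a) (hb : 0 ≤ b)
    (hv : ‖v‖ ≤ ρ * ‖u‖) : ‖a • u - b • v‖ ≤ (a + b * ρ) * ‖u‖ :=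
  calc ‖a • u - b • v‖ ≤ a * ‖u‖ + b * ‖v‖ := by
        simpa only [norm_smul, Real.norm_of_nonneg ha, Real.norm_of_nonneg hb]
          using norm_sub_le (a • u) (b • v)
    _ ≤ a * ‖u‖ + b * (ρ * ‖u‖) := by gcongr
    _ = (a + b * ρ) * ‖u‖ := by ring

end

theorem smooth_descent_lemma_general {d : ℕ}
    (g' : EuclideanSpace ℝ (Fin d) → EuclideanSpace ℝ (Fin d))
    (ρ ρhat α : ℝ) (hρ : 0 < ρ) (hρhat : ρ < ρhat) (hα : 0 < α) (hαub : α ≤ 1 / ρhat)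
    (hlip : ∀ x y, ‖g' x - g' y‖ ≤ ρ * ‖x - y‖)
    (r : EuclideanSpace ℝ (Fin d) → EReal)
    (hrnbot : ∀ x, r x ≠ ⊥)
    (hrconv : ∀ x y : EuclideanSpace ℝ (Fin d), ∀ a b : ℝ, 0 ≤ a → 0 ≤ b → a + b = 1 →
      r (a • x + b • y) ≤ (a : EReal) * r x + (b : EReal) * r y)
    (x xhat xplus : EuclideanSpace ℝ (Fin d))
    (hxdom : r x ≠ ⊤)
    -- ρ̂(x - x̂) - ∇g(x̂) ∈ ∂r(x̂):
    (hopt : ∀ y, r y ≥ r xhat +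
      ((inner ℝ (ρhat • (x - xhat) - g' xhat) (y - xhat) : ℝ) : EReal))
    -- x⁺ = prox_{αr}(x - α∇g(x)):
    (hxplus : ∀ y, r xplus + ((1 / (2 * α) * ‖xplus - (x - α • g' x)‖ ^ 2 : ℝ) : EReal) ≤
      r y + ((1 / (2 * α) * ‖y - (x - α • g' x)‖ ^ 2 : ℝ) : EReal)) :
    ‖xplus - xhat‖ ^ 2 ≤ ‖x - xhat‖ ^ 2 - α * (ρhat - ρ) * ‖x - xhat‖ ^ 2 := by
  have hxhat_sub : IsSubgradient r xhat
      (α⁻¹ • ((xhat + α • (ρhat • (x - xhat) - g' xhat)) - xhat)) := by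
    rwa [add_sub_cancel_left, inv_smul_smul₀ hα.ne']
  have hxplus_sub : IsSubgradient r xplus (α⁻¹ • ((x - α • g' x) - xplus)) :=
    IsProxPoint.isSubgradient hrnbot hrconv hxplus
  have hnonexp := norm_sub_le_of_isSubgradient hα hxhat_sub hxplus_sub
    (hxhat_sub.ne_top hxdom) (hrnbot xhat)
  have hαρhat : α * ρhat ≤ 1 := by
    linarith [(le_div_iff₀ (hρ.trans hρhat)).1 hαub]
  have hcontract : ‖xplus - xhat‖ ≤ (1 - α * (ρhat - ρ)) * ‖x - xhat‖ :=
    calc ‖xplus - xhat‖ = ‖xhat - xplus‖ := norm_sub_rev _ _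
      _ ≤ ‖xhat + α • (ρhat • (x - xhat) - g' xhat) - (x - α • g' x)‖ := hnonexp
      _ = ‖(1 - α * ρhat) • (x - xhat) - α • (g' x - g' xhat)‖ := by
          rw [← norm_neg]
          congr 1
          module
      _ ≤ (1 - α * ρhat + α * ρ) * ‖x - xhat‖ :=
          norm_smul_sub_smul_le (by linarith) hα.le (hlip x xhat)
      _ = (1 - α * (ρhat - ρ)) * ‖x - xhat‖ := by ring
  exact sq_le_sub_mul_sq_of_le_one_sub_mul (norm_nonneg _) hcontract
    (mul_nonneg hα.le (by linarith)) (by linarith [mul_pos hα hρ])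

/-- Deterministic smooth descent lemma (Lemma 2.5 with σ = 0): for `g` C¹ with
`ρ`-Lipschitz gradient, `r` proper closed convex, `φ = g + r`, `ρ̂ > ρ`,
`α ∈ (0, 1/ρ̂]`, `x̂ = prox_{φ/ρ̂}(x)` with `ρ̂(x - x̂) ∈ ∂r(x̂) + ∇g(x̂)`, the update
`x⁺ = prox_{αr}(x - α∇g(x))` satisfies `‖x⁺ - x̂‖² ≤ ‖x - x̂‖² - α(ρ̂ - ρ)‖x - x̂‖²`. -/
theorem smooth_descent_lemma {d : ℕ}
    (g : EuclideanSpace ℝ (Fin d) → ℝ)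
    (g' : EuclideanSpace ℝ (Fin d) → EuclideanSpace ℝ (Fin d))
    (ρ ρhat α : ℝ) (hρ : 0 < ρ) (hρhat : ρ < ρhat) (hα : 0 < α) (hαub : α ≤ 1 / ρhat)
    (hdiff : ∀ x, HasGradientAt g (g' x) x)
    (hlip : ∀ x y, ‖g' x - g' y‖ ≤ ρ * ‖x - y‖)
    (r : EuclideanSpace ℝ (Fin d) → EReal)
    (hrproper : ∃ x, r x ≠ ⊤) (hrnbot : ∀ x, r x ≠ ⊥)
    (hrclosed : LowerSemicontinuous r)
    (hrconv : ∀ x y : EuclideanSpace ℝ (Fin d), ∀ a b : ℝ, 0 ≤ a → 0 ≤ b → a + b = 1 →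
      r (a • x + b • y) ≤ (a : EReal) * r x + (b : EReal) * r y)
    (x xhat xplus : EuclideanSpace ℝ (Fin d))
    (hxdom : r x ≠ ⊤)
    -- x̂ = prox_{φ/ρ̂}(x):
    (hxhat : ∀ y, (g xhat : EReal) + r xhat + ((ρhat / 2 * ‖xhat - x‖ ^ 2 : ℝ) : EReal) ≤
      (g y : EReal) + r y + ((ρhat / 2 * ‖y - x‖ ^ 2 : ℝ) : EReal))
    -- ρ̂(x - x̂) - ∇g(x̂) ∈ ∂r(x̂):
    (hopt : ∀ y, r y ≥ r xhat +
      ((inner ℝ (ρhat • (x - xhat) - g' xhat) (y - xhat) : ℝ) : EReal))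
    -- x⁺ = prox_{αr}(x - α∇g(x)):
    (hxplus : ∀ y, r xplus + ((1 / (2 * α) * ‖xplus - (x - α • g' x)‖ ^ 2 : ℝ) : EReal) ≤
      r y + ((1 / (2 * α) * ‖y - (x - α • g' x)‖ ^ 2 : ℝ) : EReal)) :
    ‖xplus - xhat‖ ^ 2 ≤ ‖x - xhat‖ ^ 2 - α * (ρhat - ρ) * ‖x - xhat‖ ^ 2 :=
  smooth_descent_lemma_general g' ρ ρhat α hρ hρhat hα hαub hlip r hrnbot hrconv x xhat xplus hxdom
    hopt hxplus
end

section
/- Let φ be proper, closed, and ρ-weakly convex with 0 < λ < 1/ρ. Then the Moreau envelope φ_λ is a λ^{-1}·max(1, ρλ/(1-ρλ))-smooth function; in particular the map x ↦ prox_{λφ}(x) is (1-ρλ)^{-1}-Lipschitz. -/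
open InnerProductSpace RealInnerProductSpace Filter Topology

section AuxEnvelope

variable {F : Type*} [NormedAddCommGroup F] [InnerProductSpace ℝ F]

private lemma combo_sq (a b : F) (t : ℝ) :
    ‖(1-t)•a + t•b‖^2 = (1-t)*‖a‖^2 + t*‖b‖^2 - t*(1-t)*‖a-b‖^2 := by
  have h1 := real_inner_self_eq_norm_sq ((1-t)•a + t•b)
  have h2 := real_inner_self_eq_norm_sq a
  have h3 := real_inner_self_eq_norm_sq b
  have h4 := real_inner_self_eq_norm_sq (a - b)
  simp only [inner_add_add_self, inner_sub_sub_self, real_inner_smul_left,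
    real_inner_smul_right] at h1 h4
  linear_combination (-1:ℝ)*h1 + (1-t)*h2 + t*h3 - t*(1-t)*h4

private lemma four_point (u v x y : F) :
    ‖v-x‖^2 + ‖u-y‖^2 - ‖u-x‖^2 - ‖v-y‖^2 = 2*⟪v-u, y-x⟫_ℝ := by
  have h1 := real_inner_self_eq_norm_sq (v - x)
  have h2 := real_inner_self_eq_norm_sq (u - y)
  have h3 := real_inner_self_eq_norm_sq (u - x)
  have h4 := real_inner_self_eq_norm_sq (v - y)
  simp only [inner_sub_sub_self] at h1 h2 h3 h4
  simp only [inner_sub_left, inner_sub_right]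
  have c1 := real_inner_comm u x
  have c2 := real_inner_comm v x
  have c3 := real_inner_comm u y
  have c4 := real_inner_comm v y
  linarith

private lemma three_point (a x y : F) :
    ‖a-y‖^2 - ‖a-x‖^2 = 2*⟪x-y, a-x⟫_ℝ + ‖x-y‖^2 := by
  have h1 := real_inner_self_eq_norm_sq (a - y)
  have h2 := real_inner_self_eq_norm_sq (a - x)
  have h3 := real_inner_self_eq_norm_sq (x - y)
  simp only [inner_sub_sub_self] at h1 h2 h3
  simp only [inner_sub_left, inner_sub_right]
  have c1 := real_inner_comm a x
  have c2 := real_inner_comm a y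
  have c3 := real_inner_comm x y
  linarith

private lemma le_of_sq_le_sq'' {a b : ℝ} (hb : 0 ≤ b) (h : a^2 ≤ b^2) (ha : 0 ≤ a) : a ≤ b := by
  nlinarith

end AuxEnvelope

set_option maxHeartbeats 1000000 in
/-- Smoothness of the Moreau envelope: for proper closed `ρ`-weakly convex `φ` and
`0 < λ < 1/ρ`, the envelope `φ_λ` is differentiable with
`∇φ_λ(x) = λ⁻¹(x - prox_{λφ}(x))`, the gradient is
`λ⁻¹·max(1, ρλ/(1-ρλ))`-Lipschitz, and the prox map is `(1-ρλ)⁻¹`-Lipschitz. -/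
theorem envelope_smooth_prox_lipschitz {d : ℕ}
    (φ : EuclideanSpace ℝ (Fin d) → EReal) (ρ lam : ℝ)
    (hρ : 0 ≤ ρ) (hlam : 0 < lam) (hlamρ : lam * ρ < 1)
    (hproper : ∃ x, φ x ≠ ⊤) (hnbot : ∀ x, φ x ≠ ⊥)
    (hclosed : LowerSemicontinuous φ)
    (hwc : ∀ x y : EuclideanSpace ℝ (Fin d), ∀ a b : ℝ, 0 ≤ a → 0 ≤ b → a + b = 1 →
      φ (a • x + b • y) + ((ρ / 2 * ‖a • x + b • y‖ ^ 2 : ℝ) : EReal) ≤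
        (a : EReal) * (φ x + ((ρ / 2 * ‖x‖ ^ 2 : ℝ) : EReal)) +
        (b : EReal) * (φ y + ((ρ / 2 * ‖y‖ ^ 2 : ℝ) : EReal)))
    -- p = prox_{λφ} and env = φ_λ:
    (p : EuclideanSpace ℝ (Fin d) → EuclideanSpace ℝ (Fin d))
    (hp : ∀ x y, φ (p x) + ((1 / (2 * lam) * ‖p x - x‖ ^ 2 : ℝ) : EReal) ≤
      φ y + ((1 / (2 * lam) * ‖y - x‖ ^ 2 : ℝ) : EReal))
    (env : EuclideanSpace ℝ (Fin d) → ℝ)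
    (henv : ∀ x, (env x : EReal) = φ (p x) + ((1 / (2 * lam) * ‖p x - x‖ ^ 2 : ℝ) : EReal)) :
    (∀ x y, ‖p x - p y‖ ≤ (1 - ρ * lam)⁻¹ * ‖x - y‖) ∧
    (∀ x, HasGradientAt env (lam⁻¹ • (x - p x)) x) ∧
    (∀ x y, ‖lam⁻¹ • (x - p x) - lam⁻¹ • (y - p y)‖ ≤
      lam⁻¹ * max 1 (ρ * lam / (1 - ρ * lam)) * ‖x - y‖) := by
  have hs : ρ * lam < 1 := by rw [mul_comm]; exact hlamρ
  have h1s : 0 < 1 - ρ * lam := by linarith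
  set κ := 1 / (2 * lam) with hκdef
  have hκ : 0 < κ := by positivity
  have hκ2 : 2 * κ = lam⁻¹ := by rw [hκdef]; field_simp
  -- φ ∘ p is real-valued
  set Φ : EuclideanSpace ℝ (Fin d) → ℝ := fun x => (φ (p x)).toReal with hΦdef
  have hΦ : ∀ x, φ (p x) = ((Φ x : ℝ) : EReal) := by
    intro x
    have hne : φ (p x) ≠ ⊤ := by
      intro htop
      have := henv x
      rw [htop, EReal.top_add_coe] at this
      exact (EReal.coe_ne_top _) this
    exact (EReal.coe_toReal hne (hnbot _)).symm
  have henvR : ∀ x, env x = Φ x + κ * ‖p x - x‖^2 := by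
    intro x
    have := henv x
    rw [hΦ x] at this
    exact_mod_cast this
  have hpR : ∀ x y, Φ x + κ * ‖p x - x‖^2 ≤ Φ y + κ * ‖p y - x‖^2 := by
    intro x y
    have := hp x (p y)
    rw [hΦ x, hΦ y] at this
    exact_mod_cast this
  -- quadratic growth at the prox point
  have key : ∀ x y, Φ x + κ*‖p x - x‖^2 + (κ - ρ/2)*‖p x - p y‖^2 ≤ Φ y + κ*‖p y - x‖^2 := by
    intro x y
    have main : ∀ t : ℝ, 0 < t → t ≤ 1 →
        Φ x + κ*‖p x - x‖^2 + (1-t)*((κ - ρ/2)*‖p x - p y‖^2) ≤ Φ y + κ*‖p y - x‖^2 := by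
      intro t ht ht1
      have hwct := hwc (p x) (p y) (1-t) t (by linarith) ht.le (by ring)
      set w := (1-t) • p x + t • p y with hw
      have hwtop : φ w ≠ ⊤ := by
        intro htop
        rw [htop, hΦ x, hΦ y, EReal.top_add_coe] at hwct
        have hco : ((1-t : ℝ) : EReal) * ((Φ x : ℝ) + ((ρ / 2 * ‖p x‖ ^ 2 : ℝ) : EReal)) +
            ((t : ℝ) : EReal) * ((Φ y : ℝ) + ((ρ / 2 * ‖p y‖ ^ 2 : ℝ) : EReal)) =
            (((1-t) * (Φ x + ρ / 2 * ‖p x‖ ^ 2) + t * (Φ y + ρ / 2 * ‖p y‖ ^ 2) : ℝ) : EReal) := by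
          push_cast
          ring
        rw [hco] at hwct
        exact (EReal.coe_ne_top _) (top_le_iff.mp hwct)
      obtain ⟨c, hc⟩ : ∃ c : ℝ, φ w = (c : EReal) :=
        ⟨(φ w).toReal, (EReal.coe_toReal hwtop (hnbot w)).symm⟩
      have hpt := hp x w
      rw [hΦ x, hc] at hpt
      have hptR : Φ x + κ * ‖p x - x‖^2 ≤ c + κ * ‖w - x‖^2 := by exact_mod_cast hpt
      rw [hc, hΦ x, hΦ y] at hwct
      have hwcR : c + ρ/2 * ‖w‖^2 ≤ (1-t) * (Φ x + ρ/2 * ‖p x‖^2) + t * (Φ y + ρ/2 * ‖p y‖^2) := by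
        exact_mod_cast hwct
      have e1 : ‖w‖^2 = (1-t)*‖p x‖^2 + t*‖p y‖^2 - t*(1-t)*‖p x - p y‖^2 := combo_sq _ _ t
      have e2 : ‖w - x‖^2 = (1-t)*‖p x - x‖^2 + t*‖p y - x‖^2 - t*(1-t)*‖p x - p y‖^2 := by
        have hwx : w - x = (1-t)•(p x - x) + t•(p y - x) := by
          rw [hw]; module
        rw [hwx, combo_sq, show (p x - x) - (p y - x) = p x - p y from by abel]
      rw [e2] at hptR
      rw [e1] at hwcR
      have h' : t*(Φ x + κ*‖p x - x‖^2 + (1-t)*((κ - ρ/2)*‖p x - p y‖^2))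
          ≤ t*(Φ y + κ*‖p y - x‖^2) := by nlinarith [hptR, hwcR]
      exact le_of_mul_le_mul_left h' ht
    have cont : Continuous (fun t : ℝ =>
        Φ x + κ*‖p x - x‖^2 + (1-t)*((κ - ρ/2)*‖p x - p y‖^2)) := by fun_prop
    have tends := (cont.tendsto 0).mono_left (nhdsWithin_le_nhds (s := Set.Ioi (0:ℝ)))
    have ev : ∀ᶠ t in nhdsWithin (0:ℝ) (Set.Ioi 0),
        Φ x + κ*‖p x - x‖^2 + (1-t)*((κ - ρ/2)*‖p x - p y‖^2) ≤ Φ y + κ*‖p y - x‖^2 := by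
      filter_upwards [Ioo_mem_nhdsGT_of_mem (Set.mem_Ico.2 ⟨le_rfl, one_pos⟩)] with t ht
      exact main t ht.1 ht.2.le
    have := le_of_tendsto tends ev
    simpa using this
  -- strong monotonicity of the prox
  have mono : ∀ x y, (1 - ρ * lam) * ‖p x - p y‖^2 ≤ ⟪p x - p y, x - y⟫_ℝ := by
    intro x y
    have k1 := key x y
    have k2 := key y x
    rw [norm_sub_rev (p y) (p x)] at k2
    have fp := four_point (p x) (p y) x y
    have hinner : ⟪p y - p x, y - x⟫_ℝ = ⟪p x - p y, x - y⟫_ℝ := by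
      rw [show p y - p x = -(p x - p y) from by abel, show y - x = -(x - y) from by abel,
        inner_neg_neg]
    rw [hinner] at fp
    have fpk : κ * (‖p y - x‖^2 + ‖p x - y‖^2 - ‖p x - x‖^2 - ‖p y - y‖^2)
        = lam⁻¹ * ⟪p x - p y, x - y⟫_ℝ := by
      rw [fp]
      linear_combination ⟪p x - p y, x - y⟫_ℝ * hκ2
    have hcomb : 2*(κ - ρ/2) * ‖p x - p y‖^2 ≤ lam⁻¹ * ⟪p x - p y, x - y⟫_ℝ := by
      linarith [k1, k2, fpk]
    have h3 := mul_le_mul_of_nonneg_left hcomb hlam.le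
    have ea : lam * (2*(κ - ρ/2) * ‖p x - p y‖^2) = (1 - ρ*lam) * ‖p x - p y‖^2 := by
      rw [hκdef]; field_simp
    have eb : lam * (lam⁻¹ * ⟪p x - p y, x - y⟫_ℝ) = ⟪p x - p y, x - y⟫_ℝ := by
      rw [← mul_assoc, mul_inv_cancel₀ hlam.ne', one_mul]
    rw [ea, eb] at h3
    exact h3
  -- Lipschitzness of the prox
  have lip : ∀ x y, ‖p x - p y‖ ≤ (1 - ρ * lam)⁻¹ * ‖x - y‖ := by
    intro x y
    have hm := mono x y
    have hcs := real_inner_le_norm (p x - p y) (x - y)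
    rw [inv_mul_eq_div, le_div_iff₀ h1s]
    nlinarith [norm_nonneg (p x - p y), norm_nonneg (x - y)]
  refine ⟨lip, ?_, ?_⟩
  · -- gradient
    intro x
    rw [hasGradientAt_iff_isLittleO]
    set C : ℝ := lam⁻¹ * (1 - ρ * lam)⁻¹ + κ with hC
    have hCpos : 0 < C := by positivity
    have bound : ∀ y, |env y - env x - ⟪lam⁻¹ • (x - p x), y - x⟫_ℝ| ≤ C * ‖y - x‖^2 := by
      intro y
      have hu := henvR x
      have hv := henvR y
      have h1 := hpR y x
      have h2 := hpR x y
      have tp1 := three_point (p x) x y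
      have tp2 := three_point (p y) x y
      have hxy : ‖x - y‖ = ‖y - x‖ := norm_sub_rev _ _
      have hxysq : ‖x - y‖^2 = ‖y - x‖^2 := by rw [hxy]
      have hgi : ⟪lam⁻¹ • (x - p x), y - x⟫_ℝ = 2*κ*⟪x - y, p x - x⟫_ℝ := by
        rw [real_inner_smul_left, ← hκ2]
        have hh : ⟪x - p x, y - x⟫_ℝ = ⟪x - y, p x - x⟫_ℝ := by
          rw [show x - y = -(y - x) from by abel, show p x - x = -(x - p x) from by abel,
            inner_neg_neg, real_inner_comm]
        rw [hh]
      have hsplit : ⟪x - y, p y - x⟫_ℝ = ⟪x - y, p x - x⟫_ℝ + ⟪x - y, p y - p x⟫_ℝ := by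
        rw [show p y - x = (p x - x) + (p y - p x) from by abel, inner_add_right]
      -- upper bound
      have hup : env y - env x - ⟪lam⁻¹ • (x - p x), y - x⟫_ℝ ≤ κ * ‖x - y‖^2 := by
        have tpk : κ*(‖p x - y‖^2 - ‖p x - x‖^2)
            = κ*(2*⟪x - y, p x - x⟫_ℝ + ‖x - y‖^2) := by rw [tp1]
        rw [hgi]
        linarith [h1, tpk, hu, hv]
      -- lower bound
      have hlow : -(C * ‖y - x‖^2) ≤ env y - env x - ⟪lam⁻¹ • (x - p x), y - x⟫_ℝ := by
        have tpk2 : κ*(‖p y - y‖^2 - ‖p y - x‖^2)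
            = κ*(2*⟪x - y, p y - x⟫_ℝ + ‖x - y‖^2) := by rw [tp2]
        have hip : -(‖x - y‖ * ‖p y - p x‖) ≤ ⟪x - y, p y - p x⟫_ℝ := by
          have h := abs_real_inner_le_norm (x - y) (p y - p x)
          have h' := neg_abs_le ⟪x - y, p y - p x⟫_ℝ
          linarith
        have hlipxy : ‖p y - p x‖ ≤ (1 - ρ*lam)⁻¹ * ‖y - x‖ := lip y x
        have hmul : ‖x - y‖ * ‖p y - p x‖ ≤ (1 - ρ*lam)⁻¹ * (‖y - x‖ * ‖y - x‖) := by
          rw [hxy]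
          nlinarith [norm_nonneg (y - x), hlipxy]
        have hip2 : -((1 - ρ*lam)⁻¹ * (‖y - x‖ * ‖y - x‖)) ≤ ⟪x - y, p y - p x⟫_ℝ :=
          le_trans (neg_le_neg hmul) hip
        have hip3 := mul_le_mul_of_nonneg_left hip2 (by positivity : (0:ℝ) ≤ 2*κ)
        have hCk : C * ‖y - x‖^2
            = 2*κ*((1 - ρ*lam)⁻¹ * (‖y - x‖ * ‖y - x‖)) + κ*‖y - x‖^2 := by
          rw [hC, ← hκ2]; ring
        have hsplitk : 2*κ*⟪x - y, p y - x⟫_ℝ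
            = 2*κ*⟪x - y, p x - x⟫_ℝ + 2*κ*⟪x - y, p y - p x⟫_ℝ := by
          rw [hsplit]; ring
        have hxysqk : κ*‖x - y‖^2 = κ*‖y - x‖^2 := by rw [hxysq]
        rw [hgi]
        rw [mul_neg] at hip3
        clear_value κ Φ C
        linarith [h2, tpk2, hu, hv, hsplitk, hip3, hCk, hxysqk,
          mul_nonneg hκ.le (sq_nonneg ‖y - x‖)]
      have hCk2 : κ * ‖x - y‖^2 ≤ C * ‖y - x‖^2 := by
        have hnn : (0:ℝ) ≤ lam⁻¹ * (1 - ρ*lam)⁻¹ := by positivity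
        have hnn2 : (0:ℝ) ≤ ‖y - x‖^2 := sq_nonneg _
        rw [hxysq, hC]
        nlinarith
      exact abs_le.2 ⟨hlow, le_trans hup hCk2⟩
    rw [Asymptotics.isLittleO_iff]
    intro c hc
    have hball : Metric.ball x (c/C) ∈ 𝓝 x := Metric.ball_mem_nhds _ (div_pos hc hCpos)
    filter_upwards [hball] with y hy
    have hyd : ‖y - x‖ < c / C := by rw [← dist_eq_norm]; exact hy
    have hyd' : C * ‖y - x‖ ≤ c := by
      rw [lt_div_iff₀ hCpos] at hyd
      nlinarith
    have hb := bound y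
    rw [Real.norm_eq_abs]
    calc |env y - env x - ⟪lam⁻¹ • (x - p x), y - x⟫_ℝ| ≤ C * ‖y - x‖^2 := hb
      _ = (C * ‖y - x‖) * ‖y - x‖ := by ring
      _ ≤ c * ‖y - x‖ := mul_le_mul_of_nonneg_right hyd' (norm_nonneg _)
  · -- Lipschitzness of the gradient
    intro x y
    have hm := mono x y
    have hl := lip x y
    have hrw : lam⁻¹ • (x - p x) - lam⁻¹ • (y - p y) = lam⁻¹ • ((x - y) - (p x - p y)) := by
      rw [← smul_sub]; congr 1; abel
    rw [hrw, norm_smul, Real.norm_eq_abs, abs_of_nonneg (inv_nonneg.2 hlam.le)]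
    suffices h : ‖(x - y) - (p x - p y)‖ ≤ max 1 (ρ*lam/(1 - ρ*lam)) * ‖x - y‖ by
      rw [mul_assoc]
      exact mul_le_mul_of_nonneg_left h (inv_nonneg.2 hlam.le)
    have hsq : ‖(x - y) - (p x - p y)‖^2
        = ‖x - y‖^2 - 2*⟪x - y, p x - p y⟫_ℝ + ‖p x - p y‖^2 := norm_sub_sq_real _ _
    have hcomm : ⟪x - y, p x - p y⟫_ℝ = ⟪p x - p y, x - y⟫_ℝ := real_inner_comm _ _
    have hq : (1 - ρ*lam) * ‖p x - p y‖ ≤ ‖x - y‖ := by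
      calc (1 - ρ*lam) * ‖p x - p y‖ ≤ (1 - ρ*lam) * ((1 - ρ*lam)⁻¹ * ‖x - y‖) :=
            mul_le_mul_of_nonneg_left hl h1s.le
        _ = ‖x - y‖ := by rw [← mul_assoc, mul_inv_cancel₀ h1s.ne', one_mul]
    rcases le_or_gt (ρ*lam) (1/2) with hhalf | hhalf
    · have hle : ‖(x - y) - (p x - p y)‖ ≤ ‖x - y‖ := by
        apply le_of_sq_le_sq'' (norm_nonneg _) ?_ (norm_nonneg _)
        nlinarith [hm, hsq, hcomm, sq_nonneg ‖p x - p y‖,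
          mul_nonneg (by linarith : (0:ℝ) ≤ 1 - 2*(ρ*lam)) (sq_nonneg ‖p x - p y‖)]
      calc ‖(x - y) - (p x - p y)‖ ≤ ‖x - y‖ := hle
        _ = 1 * ‖x - y‖ := (one_mul _).symm
        _ ≤ max 1 (ρ*lam/(1 - ρ*lam)) * ‖x - y‖ :=
            mul_le_mul_of_nonneg_right (le_max_left _ _) (norm_nonneg _)
    · have hq2 : ((1 - ρ*lam) * ‖p x - p y‖)^2 ≤ ‖x - y‖^2 :=
        pow_le_pow_left₀ (by positivity) hq 2
      have h2s : (0:ℝ) ≤ 2*(ρ*lam) - 1 := by linarith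
      have hq2' := mul_le_mul_of_nonneg_left hq2 h2s
      have hmm := mul_le_mul_of_nonneg_left hm
        (by positivity : (0:ℝ) ≤ 2*(1 - ρ*lam)^2)
      have hsq2 : ((1 - ρ*lam) * ‖(x - y) - (p x - p y)‖)^2
          = (1 - ρ*lam)^2 * ‖x - y‖^2 - 2*(1 - ρ*lam)^2*⟪x - y, p x - p y⟫_ℝ
            + (1 - ρ*lam)^2 * ‖p x - p y‖^2 := by
        rw [mul_pow, hsq]; ring
      have hDsq : ((1 - ρ*lam) * ‖(x - y) - (p x - p y)‖)^2 ≤ ((ρ*lam) * ‖x - y‖)^2 := by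
        rw [hsq2, mul_pow]
        nlinarith [hmm, hq2', hcomm]
      have hD : (1 - ρ*lam) * ‖(x - y) - (p x - p y)‖ ≤ (ρ*lam) * ‖x - y‖ :=
        le_of_sq_le_sq'' (by positivity) hDsq (by positivity)
      have hfin : ‖(x - y) - (p x - p y)‖ ≤ (ρ*lam/(1 - ρ*lam)) * ‖x - y‖ := by
        rw [div_mul_eq_mul_div, le_div_iff₀ h1s]
        linarith [hD]
      exact le_trans hfin (mul_le_mul_of_nonneg_right (le_max_right _ _) (norm_nonneg _))
end
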